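/- Let ī = (i_k)_{1≤k≤r} and j̄ = (j_k)_{1≤k≤r} be sequences in I related by a commutation move at position k (i.e., j_s = i_s for s ∉ {k,k+1}, j_k = i_{k+1}, j_{k+1} = i_k, and i_k, i_{k+1} are non-adjacent in the Dynkin diagram). Then the exchange matrix and Λ-matrix satisfy B̃^{j̄} = σ_k·B̃^{ī} and Λ^{j̄} = σ_k·Λ^{ī}, where σ_k acts by simultaneously permuting rows and columns via the transposition of k and k+1. -/
import Mathlib

noncomputable section

/-- The reflection `v ↦ v - B(v,a)·a` associated with a vector `a` (of squared length `2`)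
and a symmetric bilinear form `B`. -/
def refl' {V : Type*} [AddCommGroup V] [Module ℝ V]
    (Bf : V →ₗ[ℝ] V →ₗ[ℝ] ℝ) (a : V) : Module.End ℝ V :=
  LinearMap.id - (Bf.flip a).smulRight a

/-- `w_{≤m} = s_{i_1} s_{i_2} ⋯ s_{i_m}` for a sequence `ī = (i_k)_{k ≥ 1}`
(`s_{i_m}` acting first). -/
def wle {I V : Type*} [AddCommGroup V] [Module ℝ V]
    (Bf : V →ₗ[ℝ] V →ₗ[ℝ] ℝ) (α : I → V) (ii : ℕ → I) (m : ℕ) : Module.End ℝ V :=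
  ((List.range m).map (fun p => refl' Bf (α (ii (p + 1))))).prod

/-- `s⁺ = min {u : s < u ≤ r, i_u = i_s}`, truncated to `r + 1` (representing `+∞`)
if there is no later occurrence of the letter `i_s` within `[1,r]`. -/
def splus {I : Type*} [DecidableEq I] (ii : ℕ → I) (r s : ℕ) : ℕ :=
  sInf ({u | s < u ∧ u ≤ r ∧ ii u = ii s} ∪ {r + 1})

/-- The exchange matrix `B̃^ī` attached to a sequence `ī = (i_k)_{1 ≤ k ≤ r}`:
`b_{st} = 1` if (`s < t < s⁺ < t⁺` and `d(i_s,i_t) = 1`) or `s = t⁺`;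
`b_{st} = −1` if (`t < s < t⁺ < s⁺` and `d(i_s,i_t) = 1`) or `t = s⁺`; `0` otherwise. -/
def bmat {I : Type*} [DecidableEq I] (adj : I → I → Prop) [DecidableRel adj]
    (ii : ℕ → I) (r s t : ℕ) : ℤ :=
  if (s < t ∧ t < splus ii r s ∧ splus ii r s < splus ii r t ∧ adj (ii s) (ii t))
      ∨ s = splus ii r t then 1
  else if (t < s ∧ s < splus ii r t ∧ splus ii r t < splus ii r s ∧ adj (ii s) (ii t))
      ∨ t = splus ii r s then -1
  else 0

/-- The antisymmetric matrix
`Λ^ī_{s,t} = −(ϖ_{i_s} − w_{≤s}ϖ_{i_s}, ϖ_{i_t} + w_{≤t}ϖ_{i_t})` for `s ≤ t`. -/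
def lamMat {I V : Type*} [AddCommGroup V] [Module ℝ V]
    (Bf : V →ₗ[ℝ] V →ₗ[ℝ] ℝ) (α ϖ : I → V) (ii : ℕ → I) (s t : ℕ) : ℝ :=
  if s ≤ t then
    -(Bf (ϖ (ii s) - wle Bf α ii s (ϖ (ii s))) (ϖ (ii t) + wle Bf α ii t (ϖ (ii t))))
  else
    Bf (ϖ (ii t) - wle Bf α ii t (ϖ (ii t))) (ϖ (ii s) + wle Bf α ii s (ϖ (ii s)))

section Aux

variable {I V : Type*} [AddCommGroup V] [Module ℝ V]

theorem refl'_apply (Bf : V →ₗ[ℝ] V →ₗ[ℝ] ℝ) (a v : V) :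
    refl' Bf a v = v - Bf v a • a := by
  simp [refl']

theorem refl'_fix (Bf : V →ₗ[ℝ] V →ₗ[ℝ] ℝ) {a v : V} (h : Bf v a = 0) :
    refl' Bf a v = v := by
  rw [refl'_apply, h, zero_smul, sub_zero]

theorem refl'_B (Bf : V →ₗ[ℝ] V →ₗ[ℝ] ℝ) (hsymm : ∀ u v : V, Bf u v = Bf v u)
    {a : V} (h2 : Bf a a = 2) (u v : V) :
    Bf (refl' Bf a u) (refl' Bf a v) = Bf u v := by
  simp only [refl'_apply, map_sub, map_smul, LinearMap.sub_apply, LinearMap.smul_apply,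
    smul_eq_mul]
  rw [hsymm a v, h2]
  ring

theorem refl'_comm (Bf : V →ₗ[ℝ] V →ₗ[ℝ] ℝ) {a b : V} (hab : Bf a b = 0) (hba : Bf b a = 0) :
    refl' Bf a * refl' Bf b = refl' Bf b * refl' Bf a := by
  ext v
  simp only [Module.End.mul_apply, refl'_apply, map_sub, map_smul, LinearMap.sub_apply,
    LinearMap.smul_apply, smul_eq_mul, hab, hba, mul_zero, sub_zero, smul_sub, sub_smul,
    zero_smul, smul_zero]
  abel

theorem wle_zero (Bf : V →ₗ[ℝ] V →ₗ[ℝ] ℝ) (α : I → V) (ii : ℕ → I) :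
    wle Bf α ii 0 = 1 := by simp [wle]

theorem wle_succ (Bf : V →ₗ[ℝ] V →ₗ[ℝ] ℝ) (α : I → V) (ii : ℕ → I) (m : ℕ) :
    wle Bf α ii (m + 1) = wle Bf α ii m * refl' Bf (α (ii (m + 1))) := by
  simp [wle, List.range_succ]

theorem wle_B (Bf : V →ₗ[ℝ] V →ₗ[ℝ] ℝ) (hsymm : ∀ u v : V, Bf u v = Bf v u)
    (α : I → V) (hnorm : ∀ i, Bf (α i) (α i) = 2) (ii : ℕ → I) (m : ℕ) (u v : V) :
    Bf (wle Bf α ii m u) (wle Bf α ii m v) = Bf u v := by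
  induction m generalizing u v with
  | zero => simp [wle_zero]
  | succ n ih =>
      rw [wle_succ, Module.End.mul_apply, Module.End.mul_apply, ih,
        refl'_B Bf hsymm (hnorm _)]

theorem splus_mem' {I : Type*} [DecidableEq I] (ii : ℕ → I) (r s : ℕ) :
    (s < splus ii r s ∧ splus ii r s ≤ r ∧ ii (splus ii r s) = ii s)
      ∨ splus ii r s = r + 1 := by
  have h : splus ii r s ∈ ({u | s < u ∧ u ≤ r ∧ ii u = ii s} ∪ {r + 1} : Set ℕ) :=
    Nat.sInf_mem ⟨r + 1, Or.inr rfl⟩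
  rcases h with h | h
  · exact Or.inl h
  · exact Or.inr h

theorem splus_le {I : Type*} [DecidableEq I] (ii : ℕ → I) (r s : ℕ) :
    splus ii r s ≤ r + 1 :=
  Nat.sInf_le (Or.inr rfl)

theorem splus_min {I : Type*} [DecidableEq I] (ii : ℕ → I) (r s u : ℕ)
    (h1 : s < u) (h2 : u ≤ r) (h3 : ii u = ii s) : splus ii r s ≤ u :=
  Nat.sInf_le (Or.inl ⟨h1, h2, h3⟩)

theorem splus_gt {I : Type*} [DecidableEq I] (ii : ℕ → I) (r s : ℕ) (h : s ≤ r) :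
    s < splus ii r s := by
  rcases splus_mem' ii r s with h' | h'
  · exact h'.1
  · omega

end Aux

/-- If `j̄` is obtained from `ī` by a commutation move at position `k`
(`i_k`, `i_{k+1}` distinct and non-adjacent), then `B̃^{j̄} = σ_k·B̃^{ī}` and
`Λ^{j̄} = σ_k·Λ^{ī}`, where `σ_k` permutes rows and columns by the transposition of `k`
and `k+1`. -/
theorem exchange_and_lambda_matrix_commutation_move
    {I V : Type*} [DecidableEq I] [AddCommGroup V] [Module ℝ V]
    (Bf : V →ₗ[ℝ] V →ₗ[ℝ] ℝ)
    (hsymm : ∀ u v : V, Bf u v = Bf v u)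
    (adj : I → I → Prop) [DecidableRel adj]
    (hadjsymm : ∀ i j, adj i j → adj j i)
    (α : I → V) (hnorm : ∀ i, Bf (α i) (α i) = 2)
    (hform : ∀ i j : I, i ≠ j → Bf (α i) (α j) = if adj i j then -1 else 0)
    (ϖ : I → V) (hϖ : ∀ i j : I, Bf (α j) (ϖ i) = if i = j then 1 else 0)
    (r k : ℕ) (hk1 : 1 ≤ k) (hkr : k + 1 ≤ r)
    (ii jj : ℕ → I)
    (hne : ii k ≠ ii (k + 1)) (hnadj : ¬ adj (ii k) (ii (k + 1)))
    (hjj : ∀ m : ℕ, jj m = ii (Equiv.swap k (k + 1) m)) :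
    ∀ s t : ℕ, 1 ≤ s → s ≤ r → 1 ≤ t → t ≤ r →
      bmat adj jj r s t
        = bmat adj ii r (Equiv.swap k (k + 1) s) (Equiv.swap k (k + 1) t) ∧
      lamMat Bf α ϖ jj s t
        = lamMat Bf α ϖ ii (Equiv.swap k (k + 1) s) (Equiv.swap k (k + 1) t) := by
  set e := Equiv.swap k (k + 1) with he
  -- basic facts about the swap
  have hek : e k = k + 1 := Equiv.swap_apply_left k (k + 1)
  have hek1 : e (k + 1) = k := Equiv.swap_apply_right k (k + 1)
  have heo : ∀ m, m ≠ k → m ≠ k + 1 → e m = m := fun m h1 h2 =>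
    Equiv.swap_apply_of_ne_of_ne h1 h2
  have hee : ∀ m, e (e m) = m := fun m => Equiv.swap_apply_self k (k + 1) m
  have key : ∀ m n : ℕ, ¬(m = k ∧ n = k + 1) → ¬(m = k + 1 ∧ n = k) →
      (m < n ↔ e m < e n) := by
    intro m n h1 h2
    rw [he]
    rw [Equiv.swap_apply_def, Equiv.swap_apply_def]
    split_ifs <;> omega
  have her : ∀ m, m ≤ r → e m ≤ r := by
    intro m hm
    rcases eq_or_ne m k with rfl | h1
    · rw [hek]; omega
    rcases eq_or_ne m (k + 1) with rfl | h2
    · rw [hek1]; omega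
    · rw [heo m h1 h2]; exact hm
  have her1 : e (r + 1) = r + 1 := heo _ (by omega) (by omega)
  -- letter facts
  have hne' : ii (k + 1) ≠ ii k := Ne.symm hne
  have hnadj' : ¬ adj (ii (k + 1)) (ii k) := fun h => hnadj (hadjsymm _ _ h)
  have hab0 : Bf (α (ii k)) (α (ii (k + 1))) = 0 := by
    rw [hform _ _ hne, if_neg hnadj]
  have hba0 : Bf (α (ii (k + 1))) (α (ii k)) = 0 := by
    rw [hform _ _ hne', if_neg hnadj']
  have haϖ : Bf (α (ii k)) (ϖ (ii (k + 1))) = 0 := by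
    rw [hϖ, if_neg hne']
  have hbϖ : Bf (α (ii (k + 1))) (ϖ (ii k)) = 0 := by
    rw [hϖ, if_neg hne]
  have hbb1 : Bf (α (ii (k + 1))) (ϖ (ii (k + 1))) = 1 := by
    rw [hϖ, if_pos rfl]
  have haa1 : Bf (α (ii k)) (ϖ (ii k)) = 1 := by
    rw [hϖ, if_pos rfl]
  have hjjk : jj k = ii (k + 1) := by rw [hjj, hek]
  have hjjk1 : jj (k + 1) = ii k := by rw [hjj, hek1]
  -- splus equivariance
  have lemA : ∀ m, m ≤ r → splus jj r m = e (splus ii r (e m)) := by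
    intro m hmr
    have hm'r : e m ≤ r := her m hmr
    have hP1 : e m < splus ii r (e m) := splus_gt ii r (e m) hm'r
    have hP2 : splus ii r (e m) ≤ r + 1 := splus_le ii r (e m)
    have hPm := splus_mem' ii r (e m)
    have hPr : splus ii r (e m) ≤ r → ii (splus ii r (e m)) = ii (e m) := by
      intro h
      rcases hPm with h' | h'
      · exact h'.2.2
      · omega
    set P := splus ii r (e m) with hPdef
    have O1 : m < e P := by
      have c1 : ¬(m = k ∧ e P = k + 1) := by
        rintro ⟨h1, h⟩
        have hPk : P = k := by rw [← hee P, h, hek1]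
        rw [h1, hek] at hP1
        omega
      have c2 : ¬(m = k + 1 ∧ e P = k) := by
        rintro ⟨h1, h⟩
        have hPk : P = k + 1 := by rw [← hee P, h, hek]
        have h2 := hPr (by omega)
        rw [hPk, h1, hek1] at h2
        exact hne' h2
      have h3 := key m (e P) c1 c2
      rw [hee] at h3
      exact h3.mpr hP1
    have O2 : ∀ u, m < u → u ≤ r → jj u = jj m → e P ≤ u := by
      intro u hmu hur hju
      rw [hjj u, hjj m] at hju
      have hemu : e m < e u := by
        refine (key m u ?_ ?_).mp hmu
        · rintro ⟨h1, h2⟩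
          rw [h1, h2, hek1, hek] at hju
          exact hne hju
        · rintro ⟨h1, h2⟩; omega
      have hPu : P ≤ e u := splus_min ii r (e m) (e u) hemu (her u hur) hju
      have c1 : ¬(u = k ∧ e P = k + 1) := by
        rintro ⟨h1, h⟩
        have hPk : P = k := by rw [← hee P, h, hek1]
        have h2 := hPr (by omega)
        rw [hPk] at h2
        rw [h1, hek] at hju
        exact hne (h2.trans hju.symm)
      have c2 : ¬(u = k + 1 ∧ e P = k) := by
        rintro ⟨h1, h⟩
        have hPk : P = k + 1 := by rw [← hee P, h, hek]
        rw [hPk, h1, hek1] at hPu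
        omega
      by_contra hlt
      push_neg at hlt
      have h3 := (key u (e P) c1 c2).mp hlt
      rw [hee] at h3
      omega
    apply le_antisymm
    · rcases hPm with h' | h'
      · refine splus_min jj r m (e P) O1 (her P h'.2.1) ?_
        rw [hjj (e P), hee, h'.2.2, ← hjj m]
      · rw [h', her1]
        exact splus_le jj r m
    · rcases splus_mem' jj r m with h' | h'
      · exact O2 _ h'.1 h'.2.1 h'.2.2
      · rw [h']
        rcases hPm with hh | hh
        · have := her P hh.2.1; omega
        · rw [hh, her1]
  -- wle equivariance
  have hwk : ∀ f : ℕ → I, wle Bf α f k = wle Bf α f (k - 1) * refl' Bf (α (f k)) := by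
    intro f
    have h := wle_succ Bf α f (k - 1)
    rwa [show k - 1 + 1 = k from by omega] at h
  have hwle_lt : ∀ m, m < k → wle Bf α jj m = wle Bf α ii m := by
    intro m hm
    unfold wle
    congr 1
    apply List.map_congr_left
    intro p hp
    rw [List.mem_range] at hp
    rw [hjj, heo (p + 1) (by omega) (by omega)]
  have hwle_ne : ∀ m, m ≠ k → wle Bf α jj m = wle Bf α ii m := by
    intro m hm
    rcases lt_or_gt_of_ne hm with h | h
    · exact hwle_lt m h
    · obtain ⟨d, rfl⟩ : ∃ d, m = (k + 1) + d := ⟨m - (k + 1), by omega⟩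
      clear hm h
      induction d with
      | zero =>
          show wle Bf α jj (k + 1) = wle Bf α ii (k + 1)
          rw [wle_succ, wle_succ, hwk jj, hwk ii, hwle_lt (k - 1) (by omega),
            hjjk, hjjk1]
          rw [mul_assoc, mul_assoc, refl'_comm Bf hba0 hab0]
      | succ n ih =>
          show wle Bf α jj (k + 1 + n + 1) = wle Bf α ii (k + 1 + n + 1)
          rw [wle_succ, wle_succ, ih, hjj, heo (k + 1 + n + 1) (by omega) (by omega)]
  -- reflection computations
  have hRb : refl' Bf (α (ii (k + 1))) (ϖ (ii k)) = ϖ (ii k) :=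
    refl'_fix _ (by rw [hsymm, hbϖ])
  have hRbϖ : refl' Bf (α (ii (k + 1))) (ϖ (ii (k + 1)))
      = ϖ (ii (k + 1)) - α (ii (k + 1)) := by
    rw [refl'_apply, hsymm, hbb1, one_smul]
  have hRaϖ : refl' Bf (α (ii k)) (ϖ (ii k)) = ϖ (ii k) - α (ii k) := by
    rw [refl'_apply, hsymm, haa1, one_smul]
  have hsub0 : Bf (ϖ (ii (k + 1)) - α (ii (k + 1))) (α (ii k)) = 0 := by
    rw [map_sub, LinearMap.sub_apply, hsymm (ϖ (ii (k + 1))) (α (ii k)), haϖ, hba0]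
    ring
  have hRafix : refl' Bf (α (ii k)) (ϖ (ii (k + 1)) - α (ii (k + 1)))
      = ϖ (ii (k + 1)) - α (ii (k + 1)) := refl'_fix _ hsub0
  have hfix : refl' Bf (α (ii k)) (refl' Bf (α (ii (k + 1))) (ϖ (ii (k + 1))))
      = refl' Bf (α (ii (k + 1))) (ϖ (ii (k + 1))) := by
    rw [hRbϖ, hRafix]
  -- key vector lemma
  have hvec : ∀ m, wle Bf α jj m (ϖ (jj m))
      = wle Bf α ii (e m) (ϖ (ii (e m))) := by
    intro m
    by_cases hmk : m = k
    · rw [hmk, hek, hjjk]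
      rw [hwk jj, Module.End.mul_apply, hjjk, hwle_lt (k - 1) (by omega)]
      rw [wle_succ, Module.End.mul_apply, hwk ii, Module.End.mul_apply, hfix]
    · by_cases hmk1 : m = k + 1
      · rw [hmk1, hek1, hjjk1]
        rw [hwle_ne (k + 1) (by omega), wle_succ, Module.End.mul_apply, hRb]
      · rw [heo m hmk hmk1, hwle_ne m hmk, hjj m, heo m hmk hmk1]
  -- the key bilinear identity
  have hBkey : Bf (wle Bf α ii k (ϖ (ii k))) (wle Bf α ii (k + 1) (ϖ (ii (k + 1))))
      = Bf (ϖ (ii k)) (ϖ (ii (k + 1))) := by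
    rw [wle_succ, Module.End.mul_apply, hRbϖ, hwk ii, Module.End.mul_apply,
      Module.End.mul_apply, hRaϖ, hRafix]
    rw [wle_B Bf hsymm α hnorm]
    simp only [map_sub, LinearMap.sub_apply]
    rw [hsymm (ϖ (ii k)) (α (ii (k + 1))), hbϖ, haϖ, hab0]
    ring
  intro s t hs1 hsr ht1 htr
  constructor
  · -- exchange matrix
    have e1 : splus jj r s = e (splus ii r (e s)) := lemA s hsr
    have e2 : splus jj r t = e (splus ii r (e t)) := lemA t htr
    have hPm := splus_mem' ii r (e s)
    have hQm := splus_mem' ii r (e t)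
    have hPr : splus ii r (e s) ≤ r → ii (splus ii r (e s)) = ii (e s) := by
      intro h
      rcases hPm with h' | h'
      · exact h'.2.2
      · omega
    have hQr : splus ii r (e t) ≤ r → ii (splus ii r (e t)) = ii (e t) := by
      intro h
      rcases hQm with h' | h'
      · exact h'.2.2
      · omega
    unfold bmat
    rw [e1, e2, hjj s, hjj t]
    set P := splus ii r (e s) with hP
    set Q := splus ii r (e t) with hQ
    have hC1 : ((s < t ∧ t < e P ∧ e P < e Q ∧ adj (ii (e s)) (ii (e t))) ∨ s = e Q)
        ↔ ((e s < e t ∧ e t < P ∧ P < Q ∧ adj (ii (e s)) (ii (e t))) ∨ e s = Q) := by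
      apply or_congr
      · by_cases hA : adj (ii (e s)) (ii (e t))
        · have x1 : s < t ↔ e s < e t := by
            refine key s t ?_ ?_
            · rintro ⟨h1, h2⟩
              rw [h1, h2, hek, hek1] at hA
              exact hnadj' hA
            · rintro ⟨h1, h2⟩
              rw [h1, h2, hek1, hek] at hA
              exact hnadj hA
          have x2 : t < e P ↔ e t < P := by
            have c1 : ¬(t = k ∧ e P = k + 1) := by
              rintro ⟨h1, h⟩
              have hPk : P = k := by rw [← hee P, h, hek1]
              have h2 := hPr (by omega)
              rw [hPk] at h2
              rw [h1, hek, ← h2] at hA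
              exact hnadj hA
            have c2 : ¬(t = k + 1 ∧ e P = k) := by
              rintro ⟨h1, h⟩
              have hPk : P = k + 1 := by rw [← hee P, h, hek]
              have h2 := hPr (by omega)
              rw [hPk] at h2
              rw [h1, hek1, ← h2] at hA
              exact hnadj' hA
            have h3 := key t (e P) c1 c2
            rwa [hee] at h3
          have x3 : e P < e Q ↔ P < Q := by
            have c1 : ¬(P = k ∧ Q = k + 1) := by
              rintro ⟨h1, h2⟩
              have ha := hPr (by omega); rw [h1] at ha
              have hb := hQr (by omega); rw [h2] at hb
              rw [← ha, ← hb] at hA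
              exact hnadj hA
            have c2 : ¬(P = k + 1 ∧ Q = k) := by
              rintro ⟨h1, h2⟩
              have ha := hPr (by omega); rw [h1] at ha
              have hb := hQr (by omega); rw [h2] at hb
              rw [← ha, ← hb] at hA
              exact hnadj' hA
            exact (key P Q c1 c2).symm
          rw [x1, x2, x3]
        · simp [hA]
      · constructor
        · intro h; rw [h, hee]
        · intro h; rw [← h, hee]
    have hC2 : ((t < s ∧ s < e Q ∧ e Q < e P ∧ adj (ii (e s)) (ii (e t))) ∨ t = e P)
        ↔ ((e t < e s ∧ e s < Q ∧ Q < P ∧ adj (ii (e s)) (ii (e t))) ∨ e t = P) := by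
      apply or_congr
      · by_cases hA : adj (ii (e s)) (ii (e t))
        · have x1 : t < s ↔ e t < e s := by
            refine key t s ?_ ?_
            · rintro ⟨h1, h2⟩
              rw [h2, h1, hek1, hek] at hA
              exact hnadj hA
            · rintro ⟨h1, h2⟩
              rw [h2, h1, hek, hek1] at hA
              exact hnadj' hA
          have x2 : s < e Q ↔ e s < Q := by
            have c1 : ¬(s = k ∧ e Q = k + 1) := by
              rintro ⟨h1, h⟩
              have hQk : Q = k := by rw [← hee Q, h, hek1]
              have h2 := hQr (by omega)
              rw [hQk] at h2
              rw [h1, hek, ← h2] at hA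
              exact hnadj' hA
            have c2 : ¬(s = k + 1 ∧ e Q = k) := by
              rintro ⟨h1, h⟩
              have hQk : Q = k + 1 := by rw [← hee Q, h, hek]
              have h2 := hQr (by omega)
              rw [hQk] at h2
              rw [h1, hek1, ← h2] at hA
              exact hnadj hA
            have h3 := key s (e Q) c1 c2
            rwa [hee] at h3
          have x3 : e Q < e P ↔ Q < P := by
            have c1 : ¬(Q = k ∧ P = k + 1) := by
              rintro ⟨h1, h2⟩
              have ha := hQr (by omega); rw [h1] at ha
              have hb := hPr (by omega); rw [h2] at hb
              rw [← ha, ← hb] at hA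
              exact hnadj' hA
            have c2 : ¬(Q = k + 1 ∧ P = k) := by
              rintro ⟨h1, h2⟩
              have ha := hQr (by omega); rw [h1] at ha
              have hb := hPr (by omega); rw [h2] at hb
              rw [← ha, ← hb] at hA
              exact hnadj hA
            exact (key Q P c1 c2).symm
          rw [x1, x2, x3]
        · simp [hA]
      · constructor
        · intro h; rw [h, hee]
        · intro h; rw [← h, hee]
    exact if_congr hC1 rfl (if_congr hC2 rfl rfl)
  · -- lambda matrix
    by_cases hc : s = k ∧ t = k + 1
    · obtain ⟨rfl', rfl''⟩ := hc
      rw [rfl', rfl'']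
      rw [hek, hek1]
      unfold lamMat
      rw [if_pos (by omega : k ≤ k + 1), if_neg (by omega : ¬ (k + 1 ≤ k))]
      rw [hvec k, hvec (k + 1), hek, hek1, hjjk, hjjk1]
      simp only [map_sub, map_add, LinearMap.sub_apply, LinearMap.add_apply]
      have h1 := hsymm (ϖ (ii (k + 1))) (ϖ (ii k))
      have h2 := hsymm (ϖ (ii (k + 1))) (wle Bf α ii k (ϖ (ii k)))
      have h3 := hsymm (wle Bf α ii (k + 1) (ϖ (ii (k + 1)))) (ϖ (ii k))
      have h4 := hsymm (wle Bf α ii (k + 1) (ϖ (ii (k + 1)))) (wle Bf α ii k (ϖ (ii k)))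
      linarith [hBkey]
    · by_cases hc2 : s = k + 1 ∧ t = k
      · obtain ⟨rfl', rfl''⟩ := hc2
        rw [rfl', rfl'']
        rw [hek1, hek]
        unfold lamMat
        rw [if_neg (by omega : ¬ (k + 1 ≤ k)), if_pos (by omega : k ≤ k + 1)]
        rw [hvec k, hvec (k + 1), hek, hek1, hjjk, hjjk1]
        simp only [map_sub, map_add, LinearMap.sub_apply, LinearMap.add_apply]
        have h1 := hsymm (ϖ (ii (k + 1))) (ϖ (ii k))
        have h2 := hsymm (ϖ (ii (k + 1))) (wle Bf α ii k (ϖ (ii k)))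
        have h3 := hsymm (wle Bf α ii (k + 1) (ϖ (ii (k + 1)))) (ϖ (ii k))
        have h4 := hsymm (wle Bf α ii (k + 1) (ϖ (ii (k + 1)))) (wle Bf α ii k (ϖ (ii k)))
        linarith [hBkey]
      · have hord : s ≤ t ↔ e s ≤ e t := by
          have hk' := key t s (fun hh => hc2 ⟨hh.2, hh.1⟩) (fun hh => hc ⟨hh.2, hh.1⟩)
          rw [← not_lt, ← not_lt, hk']
        unfold lamMat
        by_cases h : s ≤ t
        · rw [if_pos h, if_pos (hord.mp h), hvec s, hvec t, hjj s, hjj t]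
        · rw [if_neg h, if_neg (fun hh => h (hord.mpr hh)), hvec t, hvec s, hjj s, hjj t]
end
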